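/- Let S be a semigroup with zero 0, and let I be the left socle of S. If S is right stable, then H_R(S) is finite if and only if H_R(S/I) is finite, in which case H_R(S) ≤ 2·H_R(S/I) + 1. -/

import Mathlib

/-!
An `R`-chain of `S` of length `m` consists of entries outside `I`, then nonzero entries of the
left socle `I`, then possibly `0`. The first part, followed by the zero of `S/I`, is an `R`-chain
of `S/I`. For the second part the key point is that if `b₁ ≠ 0` lies in the socle and
`b₂ <_R b₁`, then right stability and `0`-minimality force `b₂ t = 0` for every `t` in the socle.
Hence in a chain `b₀ >_R b₁ >_R ⋯ >_R b_{l-1}` of nonzero socle elements, writing `b_j = b₁ x_j`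
(`j ≥ 2`) with `x₂ ≥_R x₃ ≥_R ⋯` puts every `x_j` outside the socle (as `b₁ x_j = b_j ≠ 0`), and
the `x_j` followed by zero form an `R`-chain of `S/I` of length `l - 1`. Altogether
`m ≤ (H - 1) + (H + 1) + 1` for `H = H_R(S/I)`. Conversely, sending the new zero to `0` maps
`R`-chains of `S/I` to `R`-chains of `S`.
-/

namespace GreenHeights

universe u

section Defs

variable {S : Type u} [Semigroup S]

/-- Green's preorder `≤_L`: `a ≤_L b` iff `a = s * b` for some `s ∈ S¹`
(i.e. `a = b` or `a = s * b` for some `s ∈ S`). -/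
def leL (a b : S) : Prop := a = b ∨ ∃ s : S, a = s * b

/-- Green's preorder `≤_R`: `a ≤_R b` iff `a = b * s` for some `s ∈ S¹`. -/
def leR (a b : S) : Prop := a = b ∨ ∃ s : S, a = b * s

/-- Green's preorder `≤_J`: `a ≤_J b` iff `a = s * b * t` for some `s, t ∈ S¹`. -/
def leJ (a b : S) : Prop :=
  a = b ∨ (∃ s : S, a = s * b) ∨ (∃ t : S, a = b * t) ∨ ∃ s t : S, a = s * b * t

/-- Green's preorder `≤_H`. -/
def leH (a b : S) : Prop := leL a b ∧ leR a b

/-- Green's relation `L`. -/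
def eqvL (a b : S) : Prop := leL a b ∧ leL b a

/-- Green's relation `R`. -/
def eqvR (a b : S) : Prop := leR a b ∧ leR b a

/-- Green's relation `J`. -/
def eqvJ (a b : S) : Prop := leJ a b ∧ leJ b a

/-- Green's relation `H`. -/
def eqvH (a b : S) : Prop := leH a b ∧ leH b a

/-- `a <_L b`. -/
def ltL (a b : S) : Prop := leL a b ∧ ¬ leL b a

/-- `a <_R b`. -/
def ltR (a b : S) : Prop := leR a b ∧ ¬ leR b a

/-- `a <_J b`. -/
def ltJ (a b : S) : Prop := leJ a b ∧ ¬ leJ b a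

/-- `a <_H b`. -/
def ltH (a b : S) : Prop := leH a b ∧ ¬ leH b a

end Defs

/-- The set of lengths of strictly decreasing chains with respect to a relation `lt`:
`m` is a chain length if there is a sequence `c 0 >' c 1 >' … >' c (m-1)`. -/
def chainLengths {T : Type u} (lt : T → T → Prop) : Set ℕ :=
  {m | ∃ c : Fin m → T, ∀ i j : Fin m, i < j → lt (c j) (c i)}

/-- The height: the supremum, in `ℕ∞`, of the lengths of strictly decreasing chains. -/
noncomputable def heightOf {T : Type u} (lt : T → T → Prop) : ℕ∞ :=
  ⨆ m ∈ chainLengths lt, (m : ℕ∞)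

/-- The `L`-height of a semigroup. -/
noncomputable def HL (S : Type u) [Semigroup S] : ℕ∞ := heightOf (ltL (S := S))

/-- The `R`-height of a semigroup. -/
noncomputable def HR (S : Type u) [Semigroup S] : ℕ∞ := heightOf (ltR (S := S))

/-- The `J`-height of a semigroup. -/
noncomputable def HJ (S : Type u) [Semigroup S] : ℕ∞ := heightOf (ltJ (S := S))

/-- The `H`-height of a semigroup. -/
noncomputable def HH (S : Type u) [Semigroup S] : ℕ∞ := heightOf (ltH (S := S))

/-- `S` is left stable if `a ≤_L b` and `a J b` imply `a L b`. -/
def LeftStable (S : Type u) [Semigroup S] : Prop :=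
  ∀ a b : S, leL a b → eqvJ a b → eqvL a b

/-- `S` is right stable if `a ≤_R b` and `a J b` imply `a R b`. -/
def RightStable (S : Type u) [Semigroup S] : Prop :=
  ∀ a b : S, leR a b → eqvJ a b → eqvR a b

/-- `S` is stable if it is both left and right stable. -/
def Stable (S : Type u) [Semigroup S] : Prop := LeftStable S ∧ RightStable S

/-- A (two-sided) ideal of a semigroup, bundled. -/
structure SemigroupIdeal (S : Type u) [Semigroup S] where
  carrier : Set S
  nonempty : carrier.Nonempty
  mul_mem_left : ∀ (s : S) {a : S}, a ∈ carrier → s * a ∈ carrier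
  mul_mem_right : ∀ (s : S) {a : S}, a ∈ carrier → a * s ∈ carrier

/-- The Rees quotient `S/I`: its carrier is `(S \ I) ∪ {0}`, where `none` plays the role
of the new zero `0`. -/
abbrev ReesQuotient {S : Type u} [Semigroup S] (I : SemigroupIdeal S) : Type u :=
  Option {x : S // x ∉ I.carrier}

namespace ReesQuotient

variable {S : Type u} [Semigroup S] {I : SemigroupIdeal S}

open Classical in
/-- The natural projection `S → S/I`. -/
noncomputable def mk (I : SemigroupIdeal S) (x : S) : ReesQuotient I :=
  if h : x ∈ I.carrier then none else some ⟨x, h⟩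

/-- Multiplication in the Rees quotient: `a · b = ab` if `a, b, ab ∈ S \ I`,
and `a · b = 0` otherwise. -/
noncomputable def rmul (I : SemigroupIdeal S) :
    ReesQuotient I → ReesQuotient I → ReesQuotient I
  | some x, some y => mk I (x.1 * y.1)
  | _, _ => none

noncomputable instance : Mul (ReesQuotient I) := ⟨rmul I⟩

theorem none_mul (b : ReesQuotient I) : (none : ReesQuotient I) * b = none := by
  cases b <;> rfl

theorem mul_none (a : ReesQuotient I) : a * (none : ReesQuotient I) = none := by
  cases a <;> rfl

theorem mk_mul_some (a : S) (y : {x : S // x ∉ I.carrier}) :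
    mk I a * (some y : ReesQuotient I) = mk I (a * y.1) := by
  by_cases h : a ∈ I.carrier
  · have h2 : a * y.1 ∈ I.carrier := I.mul_mem_right y.1 h
    simp only [mk, dif_pos h, dif_pos h2]
    exact none_mul _
  · simp only [mk, dif_neg h]
    rfl

theorem some_mul_mk (x : {x : S // x ∉ I.carrier}) (b : S) :
    (some x : ReesQuotient I) * mk I b = mk I (x.1 * b) := by
  by_cases h : b ∈ I.carrier
  · have h2 : x.1 * b ∈ I.carrier := I.mul_mem_left x.1 h
    simp only [mk, dif_pos h, dif_pos h2]
    exact mul_none _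
  · simp only [mk, dif_neg h]
    rfl

noncomputable instance : Semigroup (ReesQuotient I) where
  mul_assoc a b c := by
    rcases a with _ | x
    · rw [none_mul, none_mul, none_mul]
    rcases b with _ | y
    · rw [mul_none, none_mul, mul_none]
    rcases c with _ | z
    · rw [mul_none, mul_none, mul_none]
    · show mk I (x.1 * y.1) * some z = some x * mk I (y.1 * z.1)
      rw [mk_mul_some, some_mul_mk, mul_assoc]

end ReesQuotient

/-- The left socle of a semigroup with zero `z`: the union of `{z}` and all `0`-minimal
`L`-classes. -/
def leftSocle {S : Type u} [Semigroup S] (z : S) : Set S :=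
  {a : S | a = z ∨ ∀ b : S, ltL b a → b = z}

section Chains

variable {T : Type u} {lt : T → T → Prop}

def chainLengthsIn (lt : T → T → Prop) (s : Set T) : Set ℕ :=
  {m | ∃ c : Fin m → T, (∀ i, c i ∈ s) ∧ ∀ i j : Fin m, i < j → lt (c j) (c i)}

theorem mem_chainLengthsIn_univ {m : ℕ} (hm : m ∈ chainLengths lt) :
    m ∈ chainLengthsIn lt Set.univ :=
  let ⟨c, hc⟩ := hm
  ⟨c, fun _ => Set.mem_univ _, hc⟩

theorem chainLengthsIn_mono {s s' : Set T} (h : s ⊆ s') :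
    chainLengthsIn lt s ⊆ chainLengthsIn lt s' :=
  fun _ ⟨c, hcs, hc⟩ => ⟨c, fun i => h (hcs i), hc⟩

theorem le_one_of_mem_chainLengthsIn (hlt : ∀ a, ¬ lt a a) {s : Set T} (hs : s.Subsingleton)
    {m : ℕ} (hm : m ∈ chainLengthsIn lt s) : m ≤ 1 := by
  obtain ⟨c, hcs, hc⟩ := hm
  by_contra! h
  have h01 := hc ⟨0, by omega⟩ ⟨1, h⟩ (Fin.mk_lt_mk.2 zero_lt_one)
  rw [hs (hcs _) (hcs ⟨0, by omega⟩)] at h01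
  exact hlt _ h01

theorem exists_add_of_mem_chainLengthsIn {s t : Set T} (ht : ∀ a b, lt a b → b ∈ t → a ∈ t)
    {m : ℕ} (hm : m ∈ chainLengthsIn lt s) :
    ∃ k l, m = k + l ∧ k ∈ chainLengthsIn lt (s \ t) ∧ l ∈ chainLengthsIn lt (s ∩ t) := by
  classical
  obtain ⟨c, hcs, hc⟩ := hm
  have hex : ∃ k, k ≤ m ∧ ∀ i : Fin m, k ≤ (i : ℕ) → c i ∈ t :=
    ⟨m, le_rfl, fun i hi => absurd i.2 (by omega)⟩
  obtain ⟨hkm, hkt⟩ := Nat.find_spec hex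
  have hk : ∀ i : Fin m, (i : ℕ) < Nat.find hex → c i ∉ t := by
    intro i hi hit
    refine Nat.find_min hex hi ⟨i.2.le, fun j hij => ?_⟩
    rcases (Fin.le_iff_val_le_val.2 hij).lt_or_eq with hij | rfl
    · exact ht _ _ (hc i j hij) hit
    · exact hit
  refine ⟨Nat.find hex, m - Nat.find hex, by omega, ?_, ?_⟩
  · exact ⟨fun i => c ⟨i, by omega⟩, fun i => ⟨hcs _, hk _ i.2⟩,
      fun i j hij => hc _ _ (Fin.mk_lt_mk.2 hij)⟩
  · exact ⟨fun j => c ⟨Nat.find hex + j, by omega⟩, fun j => ⟨hcs _, hkt _ (by simp)⟩,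
      fun i j hij => hc _ _ (Fin.mk_lt_mk.2 (by simpa using hij))⟩

theorem snoc_mem_chainLengths {k : ℕ} {c : Fin k → T}
    (hc : ∀ i j : Fin k, i < j → lt (c j) (c i)) {x : T} (hx : ∀ i, lt x (c i)) :
    k + 1 ∈ chainLengths lt := by
  refine ⟨Fin.snoc c x, fun i j hij => ?_⟩
  induction j using Fin.lastCases with
  | last =>
    induction i using Fin.lastCases with
    | last => exact absurd hij (lt_irrefl _)
    | cast i => simpa using hx i
  | cast j =>
    induction i using Fin.lastCases with
    | last => exact absurd hij (not_lt.2 (Fin.le_last _))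
    | cast i => simpa using hc i j (Fin.castSucc_lt_castSucc_iff.1 hij)

theorem le_heightOf {m : ℕ} (h : m ∈ chainLengths lt) : (m : ℕ∞) ≤ heightOf lt :=
  le_iSup₂ (f := fun (m : ℕ) (_ : m ∈ chainLengths lt) => (m : ℕ∞)) m h

theorem heightOf_le {C : ℕ∞} (h : ∀ m ∈ chainLengths lt, (m : ℕ∞) ≤ C) : heightOf lt ≤ C :=
  iSup₂_le h

theorem heightOf_le_heightOf_of_map {T' : Type u} {lt' : T' → T' → Prop} (f : T → T')
    (hf : ∀ a b, lt a b → lt' (f a) (f b)) : heightOf lt ≤ heightOf lt' :=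
  heightOf_le fun _ ⟨c, hc⟩ => le_heightOf ⟨f ∘ c, fun i j hij => hf _ _ (hc i j hij)⟩

end Chains

section Green

variable {S : Type u} [Semigroup S] {a b c : S}

theorem leR_refl (a : S) : leR a a := Or.inl rfl

theorem leR_trans (hab : leR a b) (hbc : leR b c) : leR a c := by
  rcases hab with rfl | ⟨s, rfl⟩
  · exact hbc
  · rcases hbc with rfl | ⟨t, rfl⟩
    · exact Or.inr ⟨s, rfl⟩
    · exact Or.inr ⟨t * s, mul_assoc c t s⟩

theorem leR_mul_right (a s : S) : leR (a * s) a := Or.inr ⟨s, rfl⟩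

theorem leR.mul_left (h : leR a b) (x : S) : leR (x * a) (x * b) := by
  rcases h with rfl | ⟨s, rfl⟩
  · exact leR_refl _
  · exact Or.inr ⟨s, (mul_assoc x b s).symm⟩

theorem leR.leJ (h : leR a b) : leJ a b := by
  rcases h with rfl | ⟨s, rfl⟩
  · exact Or.inl rfl
  · exact Or.inr (Or.inr (Or.inl ⟨s, rfl⟩))

theorem ltR_irrefl (a : S) : ¬ ltR a a := fun h => h.2 h.1

theorem exists_eq_mul_of_ltR (h : ltR a b) : ∃ s, a = b * s := by
  rcases h.1 with rfl | hs
  · exact absurd (leR_refl a) h.2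
  · exact hs

theorem ltR_of_leR_of_ltR_mul_left {x : S} (hab : leR a b) (h : ltR (x * a) (x * b)) :
    ltR a b :=
  ⟨hab, fun hba => h.2 (hba.mul_left x)⟩

theorem leJ_of_leL_mul (h : leL a (b * c)) : leJ a b := by
  rcases h with rfl | ⟨w, rfl⟩
  · exact Or.inr (Or.inr (Or.inl ⟨c, rfl⟩))
  · exact Or.inr (Or.inr (Or.inr ⟨w, c, (mul_assoc w b c).symm⟩))

theorem exists_chain_eq_mul_left {n : ℕ} (c : Fin n → S)
    (hc : ∀ i j : Fin n, i < j → ltR (c j) (c i)) (ha : ∀ i, ∃ d, c i = a * d) :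
    ∃ d : Fin n → S, (∀ i, c i = a * d i) ∧ ∀ i j : Fin n, i < j → ltR (d j) (d i) := by
  induction n generalizing a with
  | zero => exact ⟨Fin.elim0, fun i => i.elim0, fun i => i.elim0⟩
  | succ n ih =>
    obtain ⟨d₀, hd₀⟩ := ha 0
    obtain ⟨d, hcd, hd⟩ := ih (a := c 0) (Fin.tail c)
      (fun i j hij => hc _ _ (Fin.succ_lt_succ_iff.2 hij))
      (fun i => exists_eq_mul_of_ltR (hc 0 i.succ i.succ_pos))
    have hcons : ∀ i, c i = a * (Fin.cons d₀ (fun i => d₀ * d i) : Fin (n + 1) → S) i := by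
      refine Fin.cases ?_ fun i => ?_
      · simpa using hd₀
      · rw [Fin.cons_succ, ← mul_assoc, ← hd₀, ← hcd]
        rfl
    refine ⟨_, hcons, fun i j hij => ltR_of_leR_of_ltR_mul_left ?_ (by
      rw [← hcons, ← hcons]; exact hc i j hij)⟩
    induction j using Fin.cases with
    | zero => exact absurd hij (Fin.not_lt_zero i)
    | succ j =>
      induction i using Fin.cases with
      | zero => simpa using leR_mul_right d₀ (d j)
      | succ i => simpa using (hd i j (Fin.succ_lt_succ_iff.1 hij)).1.mul_left d₀

end Green

section LeftSocle

variable {S : Type u} [Semigroup S] {z : S}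

theorem leR_zero (hz : ∀ s : S, z * s = z ∧ s * z = z) (a : S) : leR z a :=
  Or.inr ⟨z, ((hz a).2).symm⟩

theorem eq_zero_of_leR_zero (hz : ∀ s : S, z * s = z ∧ s * z = z) {a : S} (h : leR a z) :
    a = z := by
  rcases h with rfl | ⟨s, rfl⟩
  · rfl
  · exact (hz s).1

theorem leL_of_leL_of_mem_leftSocle {x u : S} (hx : x ∈ leftSocle z) (hxz : x ≠ z)
    (hu : leL u x) (huz : u ≠ z) : leL x u := by
  rcases hx with hx | hx
  · exact absurd hx hxz
  · by_contra hn
    exact huz (hx u ⟨hu, hn⟩)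

theorem leR_of_leR_of_mul_ne_zero (hst : RightStable S) {b e : S} (hb : b ∈ leftSocle z)
    (hbz : b ≠ z) (he : leR e b) (heb : e * b ≠ z) : leR b e :=
  have hbeb : leL b (e * b) := leL_of_leL_of_mem_leftSocle hb hbz (Or.inr ⟨e, rfl⟩) heb
  (hst e b he ⟨he.leJ, leJ_of_leL_mul hbeb⟩).2

theorem mul_eq_zero_of_ltR_of_mem_leftSocle (hz : ∀ s : S, z * s = z ∧ s * z = z)
    (hst : RightStable S) {b₁ b₂ t : S} (hb₁ : b₁ ∈ leftSocle z) (hb₁z : b₁ ≠ z)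
    (h : ltR b₂ b₁) (ht : t ∈ leftSocle z) : b₂ * t = z := by
  by_contra hy
  have htz : t ≠ z := by
    rintro rfl
    exact hy (hz b₂).2
  -- `0`-minimality of `t` gives `t ≤_L b₂ t`, hence a left identity `e ≤_R b₂` of `b₂ t`
  obtain ⟨e, he, hey⟩ : ∃ e, leR e b₂ ∧ e * (b₂ * t) = b₂ * t := by
    rcases leL_of_leL_of_mem_leftSocle ht htz (Or.inr ⟨b₂, rfl⟩) hy with hty | ⟨w, hw⟩
    · exact ⟨b₂, leR_refl b₂, by rw [← hty]; exact hty.symm⟩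
    · exact ⟨b₂ * w, leR_mul_right b₂ w, by rw [mul_assoc, ← hw]⟩
  have heb₁ : e * b₁ = z := by
    by_contra heb₁
    exact h.2 (leR_trans (leR_of_leR_of_mul_ne_zero hst hb₁ hb₁z (leR_trans he h.1) heb₁) he)
  obtain ⟨s, rfl⟩ := exists_eq_mul_of_ltR h
  apply hy
  calc b₁ * s * t = e * (b₁ * s * t) := hey.symm
    _ = e * b₁ * s * t := by simp only [mul_assoc]
    _ = z := by rw [heb₁, (hz s).1, (hz t).1]

theorem mem_chainLengthsIn_compl_leftSocle (hz : ∀ s : S, z * s = z ∧ s * z = z)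
    (hst : RightStable S) {n : ℕ} (h : n + 2 ∈ chainLengthsIn ltR (leftSocle z \ {z})) :
    n ∈ chainLengthsIn ltR (leftSocle z)ᶜ := by
  obtain ⟨b, hbs, hb⟩ := h
  obtain ⟨d, hbd, hd⟩ := exists_chain_eq_mul_left (a := b 1) (fun j : Fin n => b (j.addNat 2))
    (fun i j hij => hb _ _ ((Fin.addNat_lt_addNat_iff 2).2 hij))
    (fun j => exists_eq_mul_of_ltR (hb 1 _ (Fin.lt_def.2 (by simp))))
  refine ⟨d, fun j hdj => (hbs (j.addNat 2)).2 ?_, hd⟩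
  rw [Set.mem_singleton_iff, hbd j]
  exact mul_eq_zero_of_ltR_of_mem_leftSocle hz hst (hbs 0).1 (hbs 0).2
    (hb 0 1 (by simp)) hdj

end LeftSocle

namespace ReesQuotient

variable {S : Type u} [Semigroup S] {I : SemigroupIdeal S}

theorem mk_of_notMem {x : S} (h : x ∉ I.carrier) : mk I x = some ⟨x, h⟩ := dif_neg h

theorem eq_of_mk_eq_some {x : S} {a : {x : S // x ∉ I.carrier}} (h : mk I x = some a) :
    x = a.1 := by
  unfold mk at h
  split_ifs at h
  cases h
  rfl

theorem leR_some_some_iff {a b : {x : S // x ∉ I.carrier}} :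
    leR (some a : ReesQuotient I) (some b) ↔ leR a.1 b.1 := by
  constructor
  · rintro (hab | ⟨_ | u, hu⟩)
    · exact Or.inl (congrArg Subtype.val (Option.some.inj hab))
    · exact absurd hu (by simp [mul_none])
    · exact Or.inr ⟨u.1, (eq_of_mk_eq_some hu.symm).symm⟩
  · rintro (hab | ⟨s, hs⟩)
    · exact Or.inl (congrArg some (Subtype.ext hab))
    · refine Or.inr ⟨mk I s, ?_⟩
      rw [some_mul_mk, ← hs, mk_of_notMem a.2]

theorem ltR_some_some_iff {a b : {x : S // x ∉ I.carrier}} :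
    ltR (some a : ReesQuotient I) (some b) ↔ ltR a.1 b.1 := by
  simp only [ltR, leR_some_some_iff]

theorem leR_none (q : ReesQuotient I) : leR none q := Or.inr ⟨none, (mul_none q).symm⟩

theorem ltR_none_some (a : {x : S // x ∉ I.carrier}) : ltR (none : ReesQuotient I) (some a) := by
  refine ⟨leR_none _, ?_⟩
  rintro (h | ⟨q, h⟩)
  · exact Option.some_ne_none _ h
  · exact Option.some_ne_none _ (h.trans (none_mul q))

theorem not_ltR_none (q : ReesQuotient I) : ¬ ltR q none := fun h => h.2 (leR_none q)

theorem natCast_succ_le_HR {k : ℕ} (hk : k ∈ chainLengthsIn ltR I.carrierᶜ) :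
    ((k + 1 : ℕ) : ℕ∞) ≤ HR (ReesQuotient I) := by
  obtain ⟨c, hcI, hc⟩ := hk
  refine le_heightOf (snoc_mem_chainLengths (c := fun i => some ⟨c i, hcI i⟩) (x := none)
    (fun i j hij => ?_) fun i => ltR_none_some _)
  exact ltR_some_some_iff.2 (hc i j hij)

theorem HR_le {z : S} (hz : ∀ s : S, z * s = z ∧ s * z = z) (hzI : z ∈ I.carrier) :
    HR (ReesQuotient I) ≤ HR S := by
  refine heightOf_le_heightOf_of_map (fun q : ReesQuotient I => q.elim z Subtype.val) ?_
  rintro p (_ | b) hpb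
  · exact absurd hpb (not_ltR_none p)
  rcases p with _ | a
  · exact ⟨leR_zero hz b.1, fun hbz => b.2 ((eq_zero_of_leR_zero hz hbz : b.1 = z) ▸ hzI)⟩
  · exact ltR_some_some_iff.1 hpb

end ReesQuotient

open ReesQuotient in
theorem HR_le_two_mul_HR_reesQuotient_add_one {S : Type u} [Semigroup S] {z : S}
    (hz : ∀ s : S, z * s = z ∧ s * z = z) (hst : RightStable S)
    (I : SemigroupIdeal S) (hI : I.carrier = leftSocle z) :
    HR S ≤ 2 * HR (ReesQuotient I) + 1 := by
  refine heightOf_le fun m hm => ?_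
  obtain ⟨k, l, rfl, hk, hlI⟩ := exists_add_of_mem_chainLengthsIn (t := I.carrier)
    (fun a b hab hb => by rcases hab.1 with rfl | ⟨s, rfl⟩ <;> simp [hb, I.mul_mem_right])
    (mem_chainLengthsIn_univ hm)
  obtain ⟨l, e, rfl, hl, he⟩ := exists_add_of_mem_chainLengthsIn (t := {z})
    (fun a b hab hb => eq_zero_of_leR_zero hz (hb ▸ hab.1)) hlI
  have hkH : ((k + 1 : ℕ) : ℕ∞) ≤ HR (ReesQuotient I) :=
    natCast_succ_le_HR (chainLengthsIn_mono (by simp) hk)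
  have hlH : (l : ℕ∞) ≤ HR (ReesQuotient I) + 1 := by
    have hsoc : l ∈ chainLengthsIn ltR (leftSocle z \ {z}) :=
      chainLengthsIn_mono (fun x hx => by simpa [hI] using hx) hl
    obtain hl1 | ⟨n, rfl⟩ : l ≤ 1 ∨ ∃ n, l = n + 2 := by
      rcases l with _ | _ | n <;> simp
    · calc (l : ℕ∞) ≤ 1 := by exact_mod_cast hl1
        _ ≤ HR (ReesQuotient I) + 1 := le_add_self
    · have hn := natCast_succ_le_HR (I := I)
        (hI ▸ mem_chainLengthsIn_compl_leftSocle hz hst hsoc)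
      calc ((n + 2 : ℕ) : ℕ∞) = ((n + 1 : ℕ) : ℕ∞) + 1 := by push_cast; ring
        _ ≤ HR (ReesQuotient I) + 1 := add_le_add hn le_rfl
  have he1 : e ≤ 1 := le_one_of_mem_chainLengthsIn ltR_irrefl
    (Set.subsingleton_singleton.anti Set.inter_subset_right) he
  calc ((k + (l + e) : ℕ) : ℕ∞) ≤ ((k + 1 : ℕ) : ℕ∞) + l := by exact_mod_cast (by omega)
    _ ≤ HR (ReesQuotient I) + (HR (ReesQuotient I) + 1) := add_le_add hkH hlH
    _ = 2 * HR (ReesQuotient I) + 1 := by ring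

/-- For a right stable semigroup `S` with zero `z`, and `I` the left
socle of `S`: `H_R(S)` is finite iff `H_R(S/I)` is finite, in which case
`H_R(S) ≤ 2·H_R(S/I) + 1`. -/
theorem R_height_and_left_socle (S : Type u) [Semigroup S] (z : S)
    (hz : ∀ s : S, z * s = z ∧ s * z = z)
    (hst : RightStable S)
    (I : SemigroupIdeal S) (hI : I.carrier = leftSocle z) :
    (HR S < ⊤ ↔ HR (ReesQuotient I) < ⊤) ∧
    (HR S < ⊤ → HR S ≤ 2 * HR (ReesQuotient I) + 1) := by
  have hbound := HR_le_two_mul_HR_reesQuotient_add_one hz hst I hI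
  have hquot := ReesQuotient.HR_le hz (show z ∈ I.carrier from hI ▸ Or.inl rfl)
  refine ⟨⟨hquot.trans_lt, fun h => hbound.trans_lt ?_⟩, fun _ => hbound⟩
  lift HR (ReesQuotient I) to ℕ using h.ne with H
  exact_mod_cast ENat.natCast_lt_top (2 * H + 1)

end GreenHeights
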